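/- arXiv:0902.4570 — 4 statements merged into one kernel-verified Lean document; each statement's English description precedes it below -/
import Mathlib

section
/- The Etherington–Wedderburn numbers t_n (the number of swap-equivalence classes of binary plane trees with n leaves) satisfy t_1 = 1 and, for every n ≥ 2, 2·t_n = Σ_{i=1}^{n−1} t_i·t_{n−i} + t_{n/2}·1{n even}; this is the coefficient form of the generating-function identity 𝔗(z) = z + (𝔗(z²) + 𝔗(z)²)/2. -/
/-- A binary plane tree: either a single leaf, or a root vertex together with
an ordered pair (left subtree, right subtree) of binary plane trees. -/
inductive BinTree : Type
  | leaf : BinTree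
  | node : BinTree → BinTree → BinTree

/-- The number of leaves of a binary plane tree. -/
def BinTree.numLeaves : BinTree → ℕ
  | .leaf => 1
  | .node l r => l.numLeaves + r.numLeaves

/-- Swap-equivalence of binary plane trees: two leaves are equivalent, and
`node a b ∼ node c d` iff (`a ∼ c` and `b ∼ d`) or (`a ∼ d` and `b ∼ c`). -/
inductive TreeEquiv : BinTree → BinTree → Prop
  | leaf : TreeEquiv .leaf .leaf
  | node_same {a b c d : BinTree} :
      TreeEquiv a c → TreeEquiv b d → TreeEquiv (.node a b) (.node c d)
  | node_swap {a b c d : BinTree} :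
      TreeEquiv a d → TreeEquiv b c → TreeEquiv (.node a b) (.node c d)

/-- The Etherington–Wedderburn number `EW n`: the number of swap-equivalence classes of
binary plane trees with `n` leaves. -/
noncomputable def EW (n : ℕ) : ℕ :=
  Nat.card (Quot (fun a b : {t : BinTree // t.numLeaves = n} => TreeEquiv a.1 b.1))

namespace EWAux

open scoped Classical

theorem equiv_refl : ∀ t : BinTree, TreeEquiv t t
  | .leaf => .leaf
  | .node l r => .node_same (equiv_refl l) (equiv_refl r)

theorem equiv_symm {a b : BinTree} (h : TreeEquiv a b) : TreeEquiv b a := by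
  induction h with
  | leaf => exact .leaf
  | node_same _ _ ih1 ih2 => exact .node_same ih1 ih2
  | node_swap _ _ ih1 ih2 => exact .node_swap ih2 ih1

theorem equiv_trans {t u v : BinTree} (h1 : TreeEquiv t u) : TreeEquiv u v → TreeEquiv t v := by
  induction h1 generalizing v with
  | leaf => exact id
  | node_same _ _ ih1 ih2 =>
    intro h; cases h with
    | node_same g1 g2 => exact .node_same (ih1 g1) (ih2 g2)
    | node_swap g1 g2 => exact .node_swap (ih1 g1) (ih2 g2)
  | node_swap _ _ ih1 ih2 =>
    intro h; cases h with
    | node_same g1 g2 => exact .node_swap (ih1 g2) (ih2 g1)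
    | node_swap g1 g2 => exact .node_same (ih1 g2) (ih2 g1)

theorem equiv_numLeaves {a b : BinTree} (h : TreeEquiv a b) : a.numLeaves = b.numLeaves := by
  induction h with
  | leaf => rfl
  | node_same _ _ ih1 ih2 => simp [BinTree.numLeaves, ih1, ih2]
  | node_swap _ _ ih1 ih2 => simp [BinTree.numLeaves, ih1, ih2]; omega

theorem numLeaves_pos : ∀ t : BinTree, 1 ≤ t.numLeaves
  | .leaf => le_refl 1
  | .node l r => by
      have := numLeaves_pos l; have := numLeaves_pos r
      simp [BinTree.numLeaves]; omega

theorem node_equiv_iff {a b c d : BinTree} :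
    TreeEquiv (.node a b) (.node c d) ↔
      (TreeEquiv a c ∧ TreeEquiv b d) ∨ (TreeEquiv a d ∧ TreeEquiv b c) := by
  constructor
  · intro h; cases h with
    | node_same g1 g2 => exact Or.inl ⟨g1, g2⟩
    | node_swap g1 g2 => exact Or.inr ⟨g1, g2⟩
  · rintro (⟨g1, g2⟩ | ⟨g1, g2⟩)
    · exact .node_same g1 g2
    · exact .node_swap g1 g2

def down (n : ℕ) : {t : BinTree // t.numLeaves ≤ n + 1} →
    Unit ⊕ ({t : BinTree // t.numLeaves ≤ n} × {t : BinTree // t.numLeaves ≤ n})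
  | ⟨.leaf, _⟩ => Sum.inl ()
  | ⟨.node l r, h⟩ =>
      Sum.inr (⟨l, by have := numLeaves_pos r; simp [BinTree.numLeaves] at h; omega⟩,
               ⟨r, by have := numLeaves_pos l; simp [BinTree.numLeaves] at h; omega⟩)

theorem finite_le : ∀ n : ℕ, Finite {t : BinTree // t.numLeaves ≤ n}
  | 0 => by
      have : IsEmpty {t : BinTree // t.numLeaves ≤ 0} :=
        ⟨fun a => by have h1 := numLeaves_pos a.1; have h2 := a.2; omega⟩
      infer_instance
  | (n + 1) => by
      have := finite_le n
      refine Finite.of_injective (down n) ?_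
      rintro ⟨t1, h1⟩ ⟨t2, h2⟩ h
      cases t1 <;> cases t2 <;> simp_all [down, Subtype.ext_iff]

instance finiteT (n : ℕ) : Finite {t : BinTree // t.numLeaves = n} := by
  have := finite_le n
  exact Finite.of_injective
    (fun t => (⟨t.1, t.2.le⟩ : {t : BinTree // t.numLeaves ≤ n}))
    (fun a b h => Subtype.ext (by simpa [Subtype.ext_iff] using h))

abbrev R (n : ℕ) := fun a b : {t : BinTree // t.numLeaves = n} => TreeEquiv a.1 b.1

abbrev Q (n : ℕ) := Quot (R n)

noncomputable instance (n : ℕ) : Fintype (Q n) :=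
  letI : Finite (Q n) := Quot.finite (R n)
  Fintype.ofFinite _

theorem mk_eq_mk {n : ℕ} {a b : {t : BinTree // t.numLeaves = n}} :
    Quot.mk (R n) a = Quot.mk (R n) b ↔ TreeEquiv a.1 b.1 := by
  constructor
  · intro h
    have heq : Equivalence (R n) :=
      ⟨fun x => equiv_refl x.1, fun h => equiv_symm h, fun h1 h2 => equiv_trans h1 h2⟩
    exact heq.eqvGen_iff.mp (Quot.eqvGen_exact h)
  · exact fun h => Quot.sound h

def pairMk {i j n : ℕ} (h : i + j = n) : Q i → Q j → Q n :=
  Quot.lift₂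
    (fun a b => Quot.mk (R n)
      ⟨.node a.1 b.1, by simp [BinTree.numLeaves, a.2, b.2, h]⟩)
    (fun a b₁ b₂ hb => Quot.sound (.node_same (equiv_refl a.1) hb))
    (fun a₁ a₂ b ha => Quot.sound (.node_same ha (equiv_refl b.1)))

theorem EW_eq (m : ℕ) : EW m = Nat.card (Q m) := rfl

theorem leaf_of_one : ∀ t : BinTree, t.numLeaves = 1 → t = .leaf := by
  intro t h
  cases t with
  | leaf => rfl
  | node l r =>
    exfalso
    have := numLeaves_pos l; have := numLeaves_pos r
    simp [BinTree.numLeaves] at h; omega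

theorem EW_one : EW 1 = 1 := by
  rw [EW_eq]
  haveI : Unique (Q 1) := {
    default := Quot.mk (R 1) ⟨.leaf, rfl⟩
    uniq := by
      intro q
      induction q using Quot.ind with
      | _ a =>
        exact congrArg (Quot.mk (R 1)) (Subtype.ext (leaf_of_one a.1 a.2)) }
  exact Nat.card_unique

theorem mkT_eq_mkT {a b : BinTree} :
    Quot.mk TreeEquiv a = Quot.mk TreeEquiv b ↔ TreeEquiv a b := by
  constructor
  · intro h
    have heq : Equivalence TreeEquiv :=
      ⟨equiv_refl, equiv_symm, equiv_trans⟩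
    exact heq.eqvGen_iff.mp (Quot.eqvGen_exact h)
  · exact fun h => Quot.sound h

def toQT {m : ℕ} : Q m → Quot TreeEquiv :=
  Quot.lift (fun a => Quot.mk TreeEquiv a.1) (fun _ _ h => Quot.sound h)

noncomputable def phi (n : ℕ) :
    (Σ i : {i // i ∈ Finset.Ico 1 n}, Q i.1 × Q (n - i.1)) → Q n :=
  fun s => pairMk (by have := Finset.mem_Ico.mp s.1.2; omega) s.2.1 s.2.2

def Diag (n : ℕ) : Set (Q n) :=
  {c | ∃ (t : BinTree) (h : (BinTree.node t t).numLeaves = n),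
    c = Quot.mk (R n) ⟨.node t t, h⟩}

theorem step1 (n : ℕ) :
    (∑ i ∈ Finset.Ico 1 n, EW i * EW (n - i)) =
      Nat.card (Σ i : {i // i ∈ Finset.Ico 1 n}, Q i.1 × Q (n - i.1)) := by
  classical
  rw [Nat.card_eq_fintype_card, Fintype.card_sigma,
    ← Finset.sum_coe_sort (Finset.Ico 1 n) (fun i => EW i * EW (n - i))]
  exact Finset.sum_congr rfl fun i _ => by
    simp [Fintype.card_prod, EW_eq, Nat.card_eq_fintype_card]

theorem key (n : ℕ) (hn : 2 ≤ n) (c : Q n) :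
    Nat.card {s // phi n s = c} + (if c ∈ Diag n then 1 else 0) = 2 := by
  classical
  induction c using Quot.ind with
  | _ a =>
  obtain ⟨t, ht⟩ := a
  cases t with
  | leaf => exact absurd ht (by simp [BinTree.numLeaves]; omega)
  | node l r =>
    have hlr : l.numLeaves + r.numLeaves = n := by
      simpa [BinTree.numLeaves] using ht
    have hl1 := numLeaves_pos l
    have hr1 := numLeaves_pos r
    have hi₀ : l.numLeaves ∈ Finset.Ico 1 n := by rw [Finset.mem_Ico]; omega
    have hj₀ : r.numLeaves ∈ Finset.Ico 1 n := by rw [Finset.mem_Ico]; omega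
    set S := (Σ i : {i // i ∈ Finset.Ico 1 n}, Q i.1 × Q (n - i.1)) with hS
    set p₁ : S := ⟨⟨l.numLeaves, hi₀⟩,
      ((Quot.mk (R l.numLeaves) ⟨l, rfl⟩ : Q l.numLeaves),
       (Quot.mk (R (n - l.numLeaves)) ⟨r, by omega⟩ : Q (n - l.numLeaves)))⟩ with hp₁def
    set p₂ : S := ⟨⟨r.numLeaves, hj₀⟩,
      ((Quot.mk (R r.numLeaves) ⟨r, rfl⟩ : Q r.numLeaves),
       (Quot.mk (R (n - r.numLeaves)) ⟨l, by omega⟩ : Q (n - r.numLeaves)))⟩ with hp₂def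
    have hp1 : phi n p₁ = Quot.mk (R n) ⟨.node l r, ht⟩ :=
      mk_eq_mk.mpr (.node_same (equiv_refl l) (equiv_refl r))
    have hp2 : phi n p₂ = Quot.mk (R n) ⟨.node l r, ht⟩ :=
      mk_eq_mk.mpr (.node_swap (equiv_refl r) (equiv_refl l))
    have hDiff : (Quot.mk (R n) ⟨BinTree.node l r, ht⟩ ∈ Diag n) ↔ TreeEquiv l r := by
      constructor
      · rintro ⟨t, h, hc⟩
        rcases node_equiv_iff.mp (mk_eq_mk.mp hc) with ⟨h1, h2⟩ | ⟨h1, h2⟩ <;>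
          exact equiv_trans h1 (equiv_symm h2)
      · intro hrl
        refine ⟨l, ?_, ?_⟩
        · have := equiv_numLeaves hrl
          simp [BinTree.numLeaves]; omega
        · exact mk_eq_mk.mpr (.node_same (equiv_refl l) (equiv_symm hrl))
    have hcoe : Nat.card {s // phi n s = Quot.mk (R n) ⟨.node l r, ht⟩} =
        Set.ncard {s : S | phi n s = Quot.mk (R n) ⟨.node l r, ht⟩} :=
      Nat.card_coe_set_eq _
    by_cases hrl : TreeEquiv l r
    · -- fiber is a singleton
      have hfib : {s : S | phi n s = Quot.mk (R n) ⟨.node l r, ht⟩} = {p₁} := by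
        ext s
        simp only [Set.mem_setOf_eq, Set.mem_singleton_iff]
        constructor
        · obtain ⟨⟨i, hi⟩, L, R⟩ := s
          induction L using Quot.ind with | _ a =>
          induction R using Quot.ind with | _ b =>
          intro hs
          have hs' := mk_eq_mk.mp hs
          have hcases := node_equiv_iff.mp hs'
          have hal : TreeEquiv a.1 l := by
            rcases hcases with ⟨h1, _⟩ | ⟨h1, _⟩
            · exact h1
            · exact equiv_trans h1 (equiv_symm hrl)
          have hbr : TreeEquiv b.1 r := by
            rcases hcases with ⟨_, h2⟩ | ⟨_, h2⟩
            · exact h2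
            · exact equiv_trans h2 hrl
          have hii : i = l.numLeaves := a.2.symm.trans (equiv_numLeaves hal)
          subst hii
          exact congrArg (Sigma.mk _)
            (Prod.ext (mk_eq_mk.mpr hal) (mk_eq_mk.mpr hbr))
        · rintro rfl; exact hp1
      rw [hcoe, hfib, Set.ncard_singleton, if_pos (hDiff.mpr hrl)]
    · -- fiber is a pair
      have hfib : {s : S | phi n s = Quot.mk (R n) ⟨.node l r, ht⟩} = {p₁, p₂} := by
        ext s
        simp only [Set.mem_setOf_eq, Set.mem_insert_iff, Set.mem_singleton_iff]
        constructor
        · obtain ⟨⟨i, hi⟩, L, R⟩ := s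
          induction L using Quot.ind with | _ a =>
          induction R using Quot.ind with | _ b =>
          intro hs
          rcases node_equiv_iff.mp (mk_eq_mk.mp hs) with ⟨h1, h2⟩ | ⟨h1, h2⟩
          · have hii : i = l.numLeaves := a.2.symm.trans (equiv_numLeaves h1)
            subst hii
            exact Or.inl (congrArg (Sigma.mk _)
              (Prod.ext (mk_eq_mk.mpr h1) (mk_eq_mk.mpr h2)))
          · have hii : i = r.numLeaves := a.2.symm.trans (equiv_numLeaves h1)
            subst hii
            exact Or.inr (congrArg (Sigma.mk _)
              (Prod.ext (mk_eq_mk.mpr h1) (mk_eq_mk.mpr h2)))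
        · rintro (rfl | rfl)
          exacts [hp1, hp2]
      have hne : p₁ ≠ p₂ := by
        intro h
        apply hrl
        have := congrArg (fun s : S => toQT s.2.1) h
        simpa using mkT_eq_mkT.mp this
      rw [hcoe, hfib, Set.ncard_pair hne, if_neg ((not_iff_not.mpr hDiff).mpr hrl)]

theorem step2 (n : ℕ) (hn : 2 ≤ n) :
    Nat.card (Σ i : {i // i ∈ Finset.Ico 1 n}, Q i.1 × Q (n - i.1)) +
      Set.ncard (Diag n) = 2 * EW n := by
  classical
  have e1 : Nat.card (Σ i : {i // i ∈ Finset.Ico 1 n}, Q i.1 × Q (n - i.1)) =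
      ∑ c : Q n, Nat.card {s // phi n s = c} := by
    rw [← Nat.card_congr (Equiv.sigmaFiberEquiv (phi n)), Nat.card_eq_fintype_card,
      Fintype.card_sigma]
    exact Finset.sum_congr rfl fun c _ => Nat.card_eq_fintype_card.symm
  have e2 : Set.ncard (Diag n) = ∑ c : Q n, (if c ∈ Diag n then 1 else 0) := by
    rw [← Nat.card_coe_set_eq, Nat.card_eq_fintype_card, Fintype.card_subtype,
      Finset.sum_boole]
    simp
  rw [e1, e2, ← Finset.sum_add_distrib]
  rw [Finset.sum_congr rfl fun c _ => key n hn c]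
  simp [Finset.sum_const, EW_eq, Nat.card_eq_fintype_card, mul_comm]

theorem step4 (n : ℕ) :
    Set.ncard (Diag n) = if Even n then EW (n / 2) else 0 := by
  classical
  by_cases hev : Even n
  · rw [if_pos hev]
    have h2 : n / 2 + n / 2 = n := by
      have := Nat.even_iff.mp hev; omega
    let ψ : Q (n / 2) → ↥(Diag n) := fun L =>
      Quot.lift (fun t : {t : BinTree // t.numLeaves = n / 2} =>
        (⟨Quot.mk (R n) ⟨.node t.1 t.1, by
            have := t.2; simp [BinTree.numLeaves]; omega⟩,
          ⟨t.1, by have := t.2; simp [BinTree.numLeaves]; omega, rfl⟩⟩ : ↥(Diag n)))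
        (fun a b hab => Subtype.ext (Quot.sound (.node_same hab hab))) L
    have hbij : Function.Bijective ψ := by
      constructor
      · intro L1 L2 h
        induction L1 using Quot.ind with | _ a =>
        induction L2 using Quot.ind with | _ b =>
        have hval := congrArg Subtype.val h
        have := mk_eq_mk.mp hval
        rcases node_equiv_iff.mp this with ⟨h1, _⟩ | ⟨h1, _⟩ <;>
          exact Quot.sound h1
      · rintro ⟨c, t, h, hc⟩
        have ht2 : t.numLeaves = n / 2 := by
          simp [BinTree.numLeaves] at h; omega
        refine ⟨Quot.mk (R (n / 2)) ⟨t, ht2⟩, ?_⟩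
        exact Subtype.ext hc.symm
    rw [← Nat.card_coe_set_eq, ← Nat.card_eq_of_bijective ψ hbij, EW_eq]
  · rw [if_neg hev]
    have hD : Diag n = ∅ := by
      ext c
      simp only [Diag, Set.mem_setOf_eq, Set.mem_empty_iff_false, iff_false]
      rintro ⟨t, h, -⟩
      exact hev ⟨t.numLeaves, by simp [BinTree.numLeaves] at h; omega⟩
    rw [hD, Set.ncard_empty]

theorem main_rec (n : ℕ) (hn : 2 ≤ n) :
    2 * EW n = (∑ i ∈ Finset.Ico 1 n, EW i * EW (n - i)) +
      (if Even n then EW (n / 2) else 0) := by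
  rw [step1 n, ← step4 n, step2 n hn]

end EWAux

/-- `t₁ = 1` and, for every `n ≥ 2`,
`2·t_n = Σ_{i=1}^{n−1} t_i·t_{n−i} + t_{n/2}·1{n even}`. -/
theorem stmt_3 :
    EW 1 = 1 ∧
    ∀ n : ℕ, 2 ≤ n →
      2 * EW n = (∑ i ∈ Finset.Ico 1 n, EW i * EW (n - i)) +
        (if Even n then EW (n / 2) else 0) := by
  exact ⟨EWAux.EW_one, EWAux.main_rec⟩
end

section
/- Let a ≥ 2 be an integer, let t₀ be a binary plane tree, and let (t_(u), u ∈ L(t₀)) be a family of binary plane trees indexed by the leaves of t₀ such that |t_(u)| ≤ a for every leaf u of t₀, and |t_(u1)| + |t_(u2)| > a whenever u is a vertex of t₀ both of whose children u1, u2 are leaves of t₀. Then the set t := t₀ ∪ ⋃_{u ∈ L(t₀)} { u·v : v ∈ t_(u) } (where u·v denotes concatenation of words) is a binary plane tree, and its a-trimming satisfies t[a] = t₀. -/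
/-- A word: a finite sequence of positive integers (an element of 𝒰). -/
abbrev Word := List ℕ+

open Classical in
/-- `t ⊆ 𝒰` is a plane tree: it contains the empty word `∅`, and whenever `u·i ∈ t`,
both `u ∈ t` and `u·j ∈ t` for all `1 ≤ j ≤ i`. -/
def IsPlaneTree (t : Finset Word) : Prop :=
  ([] : Word) ∈ t ∧
    ∀ (u : Word) (i : ℕ+), u ++ [i] ∈ t → u ∈ t ∧ ∀ j : ℕ+, j ≤ i → u ++ [j] ∈ t

open Classical in
/-- The number of children of `u` in `t`: the number of words `u·i` belonging to `t`. -/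
noncomputable def numChildren (t : Finset Word) (u : Word) : ℕ :=
  (t.filter fun v => ∃ i : ℕ+, v = u ++ [i]).card

/-- `t` is binary: every vertex has `0` or `2` children. -/
def IsBinary (t : Finset Word) : Prop :=
  ∀ u ∈ t, numChildren t u = 0 ∨ numChildren t u = 2

open Classical in
/-- The set `L(t)` of leaves of `t`: vertices with no children. -/
noncomputable def leavesOf (t : Finset Word) : Finset Word :=
  t.filter fun u => numChildren t u = 0

/-- `|t|`, the number of leaves of `t`. -/
noncomputable def numLeaves (t : Finset Word) : ℕ := (leavesOf t).card

open Classical in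
/-- The subtree of `t` rooted at `u`: `t_u = {v : u·v ∈ t}`. -/
noncomputable def subtreeAt (t : Finset Word) (u : Word) : Finset Word :=
  (t.filter fun w => u <+: w).image fun w => w.drop u.length

open Classical in
/-- The `a`-trimmed tree `t[a] = {u ∈ t : |t_v| > a for every strict prefix v ≺ u}`. -/
noncomputable def trim (t : Finset Word) (a : ℕ) : Finset Word :=
  t.filter fun u => ∀ v : Word, v <+: u → v ≠ u → a < numLeaves (subtreeAt t v)

open Classical

lemma mem_subtreeAt {t : Finset Word} {p x : Word} :
    x ∈ subtreeAt t p ↔ p ++ x ∈ t := by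
  simp only [subtreeAt, Finset.mem_image, Finset.mem_filter]
  constructor
  · rintro ⟨w, ⟨hw, hp⟩, rfl⟩
    rwa [List.prefix_iff_eq_append.mp hp]
  · intro h
    exact ⟨p ++ x, ⟨h, List.prefix_append _ _⟩, List.drop_left⟩

lemma numChildren_subtreeAt (t : Finset Word) (p v : Word) :
    numChildren (subtreeAt t p) v = numChildren t (p ++ v) := by
  unfold numChildren
  apply Finset.card_bij (fun x _ => p ++ x)
  · rintro x hx
    simp only [Finset.mem_filter] at hx ⊢
    obtain ⟨hx1, i, rfl⟩ := hx
    exact ⟨mem_subtreeAt.mp hx1, i, by simp⟩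
  · intro x hx y hy h
    exact List.append_cancel_left h
  · rintro y hy
    simp only [Finset.mem_filter] at hy
    obtain ⟨hy1, i, rfl⟩ := hy
    refine ⟨v ++ [i], ?_, by simp⟩
    simp only [Finset.mem_filter]
    exact ⟨mem_subtreeAt.mpr (by simpa using hy1), i, rfl⟩

lemma exists_child_prefix {p w : Word} (h : p <+: w) (hne : p ≠ w) :
    ∃ i : ℕ+, p ++ [i] <+: w := by
  obtain ⟨d, rfl⟩ := h
  cases d with
  | nil => simp at hne
  | cons i d' => exact ⟨i, ⟨d', by simp⟩⟩

lemma numChildren_eq_zero_iff {s : Finset Word} {u : Word} :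
    numChildren s u = 0 ↔ ∀ i : ℕ+, u ++ [i] ∉ s := by
  rw [numChildren, Finset.card_eq_zero, Finset.filter_eq_empty_iff]
  constructor
  · intro h i hi
    exact h hi ⟨i, rfl⟩
  · rintro h y hy ⟨i, rfl⟩
    exact h i hy

lemma prefix_mem {s : Finset Word} (hs : IsPlaneTree s) :
    ∀ {w : Word}, w ∈ s → ∀ {p : Word}, p <+: w → p ∈ s := by
  intro w
  induction w using List.reverseRecOn with
  | nil =>
    intro hw p hp
    rwa [List.prefix_nil.mp hp]
  | append_singleton w' i ih =>
    intro hw p hp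
    rcases List.prefix_concat_iff.mp hp with rfl | hp'
    · exact hw
    · exact ih (hs.2 w' i hw).1 hp'

lemma leaf_eq_of_prefix {s : Finset Word} (hs : IsPlaneTree s) {u w : Word}
    (hu : u ∈ leavesOf s) (hw : w ∈ s) (h : u <+: w) : u = w := by
  by_contra hne
  obtain ⟨i, hi⟩ := exists_child_prefix h hne
  obtain ⟨-, hu0⟩ := Finset.mem_filter.mp hu
  exact numChildren_eq_zero_iff.mp hu0 i (prefix_mem hs hw hi)

lemma one_le_numLeaves {s : Finset Word} (hs : IsPlaneTree s) : 1 ≤ numLeaves s := by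
  obtain ⟨w, hw, hmax⟩ := Finset.exists_max_image s List.length ⟨[], hs.1⟩
  have hleaf : w ∈ leavesOf s := by
    refine Finset.mem_filter.mpr ⟨hw, numChildren_eq_zero_iff.mpr fun i hi => ?_⟩
    have := hmax _ hi
    simp at this
  exact Finset.card_pos.mpr ⟨w, hleaf⟩

lemma children_mem_of_two {s : Finset Word} (hs : IsPlaneTree s) {p : Word}
    (h : numChildren s p = 2) : p ++ [1] ∈ s ∧ p ++ [2] ∈ s := by
  have h1 : 1 < (s.filter fun v => ∃ i : ℕ+, v = p ++ [i]).card := by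
    rw [show (s.filter fun v => ∃ i : ℕ+, v = p ++ [i]).card = numChildren s p from rfl, h]
    norm_num
  obtain ⟨x, hx, y, hy, hxy⟩ := Finset.one_lt_card.mp h1
  simp only [Finset.mem_filter] at hx hy
  obtain ⟨hxs, i, rfl⟩ := hx
  obtain ⟨hys, j, rfl⟩ := hy
  have hij : i ≠ j := fun hc => hxy (by rw [hc])
  have h2 : (2 : ℕ+) ≤ i ∨ (2 : ℕ+) ≤ j := by
    rcases lt_or_gt_of_ne hij with hlt | hlt
    · right
      have h' : (2 : ℕ) ≤ (j : ℕ) :=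
        Nat.succ_le_of_lt (lt_of_le_of_lt (by exact_mod_cast i.one_le) (by exact_mod_cast hlt))
      exact_mod_cast h'
    · left
      have h' : (2 : ℕ) ≤ (i : ℕ) :=
        Nat.succ_le_of_lt (lt_of_le_of_lt (by exact_mod_cast j.one_le) (by exact_mod_cast hlt))
      exact_mod_cast h'
  rcases h2 with h2 | h2
  · exact ⟨(hs.2 p i hxs).2 1 ((2 : ℕ+).one_le.trans h2), (hs.2 p i hxs).2 2 h2⟩
  · exact ⟨(hs.2 p j hys).2 1 ((2 : ℕ+).one_le.trans h2), (hs.2 p j hys).2 2 h2⟩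

lemma numLeaves_subtreeAt (t : Finset Word) (p : Word) :
    numLeaves (subtreeAt t p) = ((leavesOf t).filter fun w => p <+: w).card := by
  unfold numLeaves
  apply Finset.card_bij (fun x _ => p ++ x)
  · rintro x hx
    simp only [leavesOf, Finset.mem_filter] at hx ⊢
    obtain ⟨hx1, hx2⟩ := hx
    rw [numChildren_subtreeAt] at hx2
    exact ⟨⟨mem_subtreeAt.mp hx1, hx2⟩, List.prefix_append _ _⟩
  · intro x hx y hy h
    exact List.append_cancel_left h
  · rintro y hy
    simp only [leavesOf, Finset.mem_filter] at hy
    obtain ⟨⟨hy1, hy2⟩, d, rfl⟩ := hy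
    refine ⟨d, ?_, rfl⟩
    simp only [leavesOf, Finset.mem_filter]
    rw [numChildren_subtreeAt]
    exact ⟨mem_subtreeAt.mpr hy1, hy2⟩

noncomputable def graft (t₀ : Finset Word) (f : Word → Finset Word) : Finset Word :=
  t₀ ∪ (leavesOf t₀).biUnion fun u => (f u).image fun v => u ++ v

lemma mem_graft {t₀ : Finset Word} {f : Word → Finset Word} {w : Word} :
    w ∈ graft t₀ f ↔ w ∈ t₀ ∨ ∃ u ∈ leavesOf t₀, ∃ v ∈ f u, w = u ++ v := by
  simp only [graft, Finset.mem_union, Finset.mem_biUnion, Finset.mem_image]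
  apply or_congr_right
  constructor <;> rintro ⟨u, hu, v, hv, h⟩ <;> exact ⟨u, hu, v, hv, h.symm⟩

lemma subtree_graft_eq {t₀ : Finset Word} {f : Word → Finset Word} (ht : IsPlaneTree t₀)
    (hf0 : ∀ u ∈ leavesOf t₀, IsPlaneTree (f u)) {u : Word} (hu : u ∈ leavesOf t₀) :
    subtreeAt (graft t₀ f) u = f u := by
  ext x
  rw [mem_subtreeAt, mem_graft]
  constructor
  · rintro (h | ⟨u', hu', v', hv', heq⟩)
    · have h1 := leaf_eq_of_prefix ht hu h (List.prefix_append _ _)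
      have hlen := congrArg List.length h1
      simp only [List.length_append] at hlen
      have hx : x = [] := List.length_eq_zero_iff.mp (by omega)
      rw [hx]; exact (hf0 u hu).1
    · have hcmp := List.prefix_or_prefix_of_prefix (List.prefix_append u x)
        (show u' <+: u ++ x by rw [heq]; exact List.prefix_append _ _)
      have huu' : u = u' := by
        rcases hcmp with h' | h'
        · exact leaf_eq_of_prefix ht hu (Finset.mem_filter.mp hu').1 h'
        · exact (leaf_eq_of_prefix ht hu' (Finset.mem_filter.mp hu).1 h').symm
      subst huu'
      rwa [List.append_cancel_left heq]
  · intro hx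
    exact Or.inr ⟨u, hu, x, hx, rfl⟩

lemma numChildren_graft_of_leaf {t₀ : Finset Word} {f : Word → Finset Word}
    (ht : IsPlaneTree t₀) (hf0 : ∀ u ∈ leavesOf t₀, IsPlaneTree (f u))
    {u : Word} (hu : u ∈ leavesOf t₀) (v : Word) :
    numChildren (graft t₀ f) (u ++ v) = numChildren (f u) v := by
  rw [← subtree_graft_eq ht hf0 hu, numChildren_subtreeAt]

lemma numChildren_graft_of_nonleaf {t₀ : Finset Word} {f : Word → Finset Word}
    (ht : IsPlaneTree t₀) {w : Word} (hw : w ∈ t₀) (hnl : numChildren t₀ w ≠ 0) :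
    numChildren (graft t₀ f) w = numChildren t₀ w := by
  unfold numChildren
  congr 1
  apply Finset.Subset.antisymm
  · intro y hy
    rw [Finset.mem_filter] at hy ⊢
    obtain ⟨hyT, i, rfl⟩ := hy
    refine ⟨?_, i, rfl⟩
    rcases mem_graft.mp hyT with h | ⟨u', hu', v', hv', heq⟩
    · exact h
    · by_cases hv : v' = []
      · subst hv
        rw [List.append_nil] at heq
        rw [heq]; exact (Finset.mem_filter.mp hu').1
      · exfalso
        have hpre : u' <+: w := by
          have h1 : u' <+: w ++ [i] := by rw [heq]; exact List.prefix_append _ _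
          rcases List.prefix_concat_iff.mp h1 with h2 | h2
          · exfalso; apply hv
            rw [h2] at heq
            have hlen := congrArg List.length heq
            simp only [List.length_append] at hlen
            exact List.length_eq_zero_iff.mp (by omega)
          · exact h2
        have he := leaf_eq_of_prefix ht hu' hw hpre
        subst he
        exact hnl (Finset.mem_filter.mp hu').2
  · exact Finset.filter_subset_filter _ Finset.subset_union_left

lemma isPlaneTree_graft {t₀ : Finset Word} {f : Word → Finset Word} (ht : IsPlaneTree t₀)
    (hf0 : ∀ u ∈ leavesOf t₀, IsPlaneTree (f u)) : IsPlaneTree (graft t₀ f) := by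
  constructor
  · exact Finset.mem_union_left _ ht.1
  · intro u i hui
    by_cases h0 : u ++ [i] ∈ t₀
    · obtain ⟨h1, h2⟩ := ht.2 u i h0
      exact ⟨Finset.mem_union_left _ h1, fun j hj => Finset.mem_union_left _ (h2 j hj)⟩
    · rcases mem_graft.mp hui with h | ⟨u', hu', v', hv', heq⟩
      · exact absurd h h0
      · have hv : v' ≠ [] := by
          rintro rfl
          rw [List.append_nil] at heq
          rw [heq] at h0
          exact h0 (Finset.mem_filter.mp hu').1
        have hpre : u' <+: u := by
          have h1 : u' <+: u ++ [i] := by rw [heq]; exact List.prefix_append _ _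
          rcases List.prefix_concat_iff.mp h1 with h2 | h2
          · exfalso; apply hv
            rw [h2] at heq
            have hlen := congrArg List.length heq
            simp only [List.length_append] at hlen
            exact List.length_eq_zero_iff.mp (by omega)
          · exact h2
        obtain ⟨d, rfl⟩ := hpre
        have hd : v' = d ++ [i] := by
          rw [List.append_assoc] at heq
          exact (List.append_cancel_left heq).symm
        subst hd
        obtain ⟨hd1, hd2⟩ := (hf0 u' hu').2 d i hv'
        constructor
        · exact mem_graft.mpr (Or.inr ⟨u', hu', d, hd1, rfl⟩)
        · intro j hj
          exact mem_graft.mpr (Or.inr ⟨u', hu', d ++ [j], hd2 j hj, by rw [List.append_assoc]⟩)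

lemma isBinary_graft {t₀ : Finset Word} {f : Word → Finset Word} (ht : IsPlaneTree t₀)
    (hb : IsBinary t₀) (hf0 : ∀ u ∈ leavesOf t₀, IsPlaneTree (f u))
    (hfb : ∀ u ∈ leavesOf t₀, IsBinary (f u)) : IsBinary (graft t₀ f) := by
  intro w hw
  rcases mem_graft.mp hw with h | ⟨u, hu, v, hv, rfl⟩
  · rcases hb w h with h0 | h2
    · have hl : w ∈ leavesOf t₀ := Finset.mem_filter.mpr ⟨h, h0⟩
      have hc := numChildren_graft_of_leaf ht hf0 hl []
      rw [List.append_nil] at hc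
      rw [hc]
      exact hfb w hl [] (hf0 w hl).1
    · rw [numChildren_graft_of_nonleaf ht h (by rw [h2]; norm_num)]
      exact Or.inr h2
  · rw [numChildren_graft_of_leaf ht hf0 hu v]
    exact hfb u hu v hv

open Classical in
noncomputable def cnt (s : Finset Word) (p : Word) : ℕ :=
  ((leavesOf s).filter fun w => p <+: w).card

lemma cnt_mono (s : Finset Word) {p q : Word} (h : p <+: q) : cnt s q ≤ cnt s p := by
  apply Finset.card_le_card
  intro w hw
  rw [Finset.mem_filter] at hw ⊢
  exact ⟨hw.1, h.trans hw.2⟩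

lemma numLeaves_subtree_eq_cnt (t : Finset Word) (p : Word) :
    numLeaves (subtreeAt t p) = cnt t p := numLeaves_subtreeAt t p

lemma cnt_add_le (s : Finset Word) (p : Word) :
    cnt s (p ++ [(1 : ℕ+)]) + cnt s (p ++ [(2 : ℕ+)]) ≤ cnt s p := by
  have hdisj : Disjoint ((leavesOf s).filter fun w => p ++ [(1 : ℕ+)] <+: w)
      ((leavesOf s).filter fun w => p ++ [(2 : ℕ+)] <+: w) := by
    rw [Finset.disjoint_left]
    intro w h1 h2
    have h1' := (Finset.mem_filter.mp h1).2
    have h2' := (Finset.mem_filter.mp h2).2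
    have h12 : ((1 : ℕ+) : ℕ+) ≠ 2 := by decide
    rcases List.prefix_or_prefix_of_prefix h1' h2' with h | h
    · rw [List.prefix_append_right_inj] at h
      have h3 := h.eq_of_length (by simp)
      simp only [List.cons.injEq, and_true] at h3
      exact h12 h3
    · rw [List.prefix_append_right_inj] at h
      have h3 := h.eq_of_length (by simp)
      simp only [List.cons.injEq, and_true] at h3
      exact h12 h3.symm
  calc cnt s (p ++ [(1 : ℕ+)]) + cnt s (p ++ [(2 : ℕ+)])
      = (((leavesOf s).filter fun w => p ++ [(1 : ℕ+)] <+: w) ∪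
          ((leavesOf s).filter fun w => p ++ [(2 : ℕ+)] <+: w)).card := by
        rw [Finset.card_union_of_disjoint hdisj]; rfl
    _ ≤ cnt s p := by
        apply Finset.card_le_card
        intro w hw
        rcases Finset.mem_union.mp hw with h | h <;>
          · rw [Finset.mem_filter] at h ⊢
            exact ⟨h.1, ((List.prefix_append _ _).trans h.2)⟩

lemma main_count {a : ℕ} {t₀ : Finset Word} {f : Word → Finset Word}
    (ht : IsPlaneTree t₀) (hb : IsBinary t₀)
    (hf0 : ∀ u ∈ leavesOf t₀, IsPlaneTree (f u))
    (hpair : ∀ u : Word, u ∈ t₀ →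
      u ++ [(1 : ℕ+)] ∈ leavesOf t₀ → u ++ [(2 : ℕ+)] ∈ leavesOf t₀ →
      a < numLeaves (f (u ++ [(1 : ℕ+)])) + numLeaves (f (u ++ [(2 : ℕ+)]))) :
    ∀ n : ℕ, ∀ p : Word, p ∈ t₀ → numChildren t₀ p = 2 →
      t₀.sup List.length ≤ p.length + n → a < cnt (graft t₀ f) p := by
  intro n
  induction n with
  | zero =>
    intro p hp h2 hn
    obtain ⟨h1, -⟩ := children_mem_of_two ht h2
    have hle := Finset.le_sup (f := List.length) h1
    simp only [List.length_append, List.length_cons, List.length_nil] at hle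
    omega
  | succ n ih =>
    intro p hp h2 hn
    obtain ⟨hc1, hc2⟩ := children_mem_of_two ht h2
    have key : ∀ k : ℕ+, p ++ [k] ∈ t₀ → numChildren t₀ (p ++ [k]) = 2 →
        a < cnt (graft t₀ f) p := by
      intro k hk hk2
      have hik := ih (p ++ [k]) hk hk2
        (by simp only [List.length_append, List.length_cons, List.length_nil]; omega)
      exact lt_of_lt_of_le hik (cnt_mono _ (List.prefix_append _ _))
    rcases hb _ hc1 with h10 | h12
    swap
    · exact key 1 hc1 h12
    rcases hb _ hc2 with h20 | h22
    swap
    · exact key 2 hc2 h22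
    have hl1 : p ++ [(1 : ℕ+)] ∈ leavesOf t₀ := Finset.mem_filter.mpr ⟨hc1, h10⟩
    have hl2 : p ++ [(2 : ℕ+)] ∈ leavesOf t₀ := Finset.mem_filter.mpr ⟨hc2, h20⟩
    have hp' := hpair p hp hl1 hl2
    have e1 : cnt (graft t₀ f) (p ++ [(1 : ℕ+)]) = numLeaves (f (p ++ [(1 : ℕ+)])) := by
      rw [← numLeaves_subtree_eq_cnt, subtree_graft_eq ht hf0 hl1]
    have e2 : cnt (graft t₀ f) (p ++ [(2 : ℕ+)]) = numLeaves (f (p ++ [(2 : ℕ+)])) := by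
      rw [← numLeaves_subtree_eq_cnt, subtree_graft_eq ht hf0 hl2]
    calc a < numLeaves (f (p ++ [(1 : ℕ+)])) + numLeaves (f (p ++ [(2 : ℕ+)])) := hp'
      _ = cnt (graft t₀ f) (p ++ [(1 : ℕ+)]) + cnt (graft t₀ f) (p ++ [(2 : ℕ+)]) := by
          rw [e1, e2]
      _ ≤ cnt (graft t₀ f) p := cnt_add_le _ _

open Classical in
/-- grafting trees `f u` of size `≤ a` at the leaves `u` of `t₀`, such that
the two trees grafted at a pair of sibling leaves have total size `> a`, produces a
binary plane tree `t` with `t[a] = t₀`. -/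
theorem stmt_6 (a : ℕ) (ha : 2 ≤ a) (t₀ : Finset Word)
    (ht₀ : IsPlaneTree t₀ ∧ IsBinary t₀)
    (f : Word → Finset Word)
    (hf : ∀ u ∈ leavesOf t₀, IsPlaneTree (f u) ∧ IsBinary (f u) ∧ numLeaves (f u) ≤ a)
    (hpair : ∀ u : Word, u ∈ t₀ →
      u ++ [(1 : ℕ+)] ∈ leavesOf t₀ → u ++ [(2 : ℕ+)] ∈ leavesOf t₀ →
      a < numLeaves (f (u ++ [(1 : ℕ+)])) + numLeaves (f (u ++ [(2 : ℕ+)]))) :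
    (IsPlaneTree (t₀ ∪ (leavesOf t₀).biUnion fun u => (f u).image fun v => u ++ v) ∧
      IsBinary (t₀ ∪ (leavesOf t₀).biUnion fun u => (f u).image fun v => u ++ v)) ∧
    trim (t₀ ∪ (leavesOf t₀).biUnion fun u => (f u).image fun v => u ++ v) a = t₀ := by
  obtain ⟨ht, hb⟩ := ht₀
  have hf0 : ∀ u ∈ leavesOf t₀, IsPlaneTree (f u) := fun u hu => (hf u hu).1
  have hfb : ∀ u ∈ leavesOf t₀, IsBinary (f u) := fun u hu => (hf u hu).2.1
  show (IsPlaneTree (graft t₀ f) ∧ IsBinary (graft t₀ f)) ∧ trim (graft t₀ f) a = t₀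
  refine ⟨⟨isPlaneTree_graft ht hf0, isBinary_graft ht hb hf0 hfb⟩, ?_⟩
  ext w
  simp only [trim, Finset.mem_filter]
  constructor
  · rintro ⟨hw, hcond⟩
    rcases mem_graft.mp hw with h | ⟨u, hu, v, hv, rfl⟩
    · exact h
    · by_cases hvnil : v = []
      · subst hvnil
        rw [List.append_nil]
        exact (Finset.mem_filter.mp hu).1
      · exfalso
        have hne : u ≠ u ++ v := by
          intro h
          have hlen := congrArg List.length h
          simp only [List.length_append] at hlen
          exact hvnil (List.length_eq_zero_iff.mp (by omega))
        have hlt := hcond u (List.prefix_append _ _) hne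
        rw [subtree_graft_eq ht hf0 hu] at hlt
        exact absurd hlt (not_lt.mpr (hf u hu).2.2)
  · intro hw
    refine ⟨mem_graft.mpr (Or.inl hw), ?_⟩
    intro p hpre hne
    have hp : p ∈ t₀ := prefix_mem ht hw hpre
    obtain ⟨i, hi⟩ := exists_child_prefix hpre hne
    have hpi : p ++ [i] ∈ t₀ := prefix_mem ht hw hi
    have h2 : numChildren t₀ p = 2 := by
      rcases hb p hp with h0 | h2
      · exact absurd hpi (numChildren_eq_zero_iff.mp h0 i)
      · exact h2
    have hmain := main_count ht hb hf0 hpair (t₀.sup List.length) p hp h2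
      (Nat.le_add_left _ _)
    rw [numLeaves_subtree_eq_cnt]
    exact hmain
end

section
/- Let (t, g) be a labeled binary plane tree with labels in a set E whose labels are pairwise distinct (a 'good' labeled tree). Then (t, g) has no symmetries: the number of labeled binary plane trees (t', g') with (t', g') ≈ (t, g) equals exactly 2^{m}, where m is the number of internal vertices of t (so m = |t| − 1 if t has |t| leaves). -/
/-- A labeled binary plane tree with labels in `E`: either a leaf carrying a label,
or a root vertex carrying a label together with an ordered pair of labeled subtrees. -/
inductive LTree (E : Type*) : Type _
  | leaf (x : E) : LTree E
  | node (x : E) (l r : LTree E) : LTree E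

/-- The equivalence `≈` on labeled binary plane trees: `leaf x ≈ leaf x'` iff `x = x'`,
and `node x a b ≈ node x' a' b'` iff `x = x'` and either (`a ≈ a'` and `b ≈ b'`) or
(`a ≈ b'` and `b ≈ a'`). -/
inductive LEquiv {E : Type*} : LTree E → LTree E → Prop
  | leaf (x : E) : LEquiv (.leaf x) (.leaf x)
  | node_same {x : E} {a b a' b' : LTree E} :
      LEquiv a a' → LEquiv b b' → LEquiv (.node x a b) (.node x a' b')
  | node_swap {x : E} {a b a' b' : LTree E} :
      LEquiv a b' → LEquiv b a' → LEquiv (.node x a b) (.node x a' b')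

/-- The list of labels of all vertices of a labeled tree. -/
def LTree.labels {E : Type*} : LTree E → List E
  | .leaf x => [x]
  | .node x a b => x :: (a.labels ++ b.labels)

/-- The number of internal vertices of a labeled tree. -/
def LTree.numInternal {E : Type*} : LTree E → ℕ
  | .leaf _ => 0
  | .node _ a b => 1 + a.numInternal + b.numInternal

theorem LEquiv.symm' {E : Type*} {s t : LTree E} (h : LEquiv s t) : LEquiv t s := by
  induction h with
  | leaf x => exact .leaf x
  | node_same _ _ ih1 ih2 => exact .node_same ih1 ih2
  | node_swap _ _ ih1 ih2 => exact .node_swap ih2 ih1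

theorem LEquiv.trans' {E : Type*} {s t u : LTree E} (h1 : LEquiv s t) :
    LEquiv t u → LEquiv s u := by
  induction h1 generalizing u with
  | leaf x => exact id
  | node_same h1a h1b iha ihb =>
    intro h2
    cases h2 with
    | node_same h2a h2b => exact .node_same (iha h2a) (ihb h2b)
    | node_swap h2a h2b => exact .node_swap (iha h2a) (ihb h2b)
  | node_swap h1a h1b iha ihb =>
    intro h2
    cases h2 with
    | node_same h2a h2b => exact .node_swap (iha h2b) (ihb h2a)
    | node_swap h2a h2b => exact .node_same (iha h2b) (ihb h2a)

theorem LEquiv.labels_perm {E : Type*} {s t : LTree E} (h : LEquiv s t) :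
    s.labels.Perm t.labels := by
  induction h with
  | leaf x => exact .refl _
  | node_same _ _ iha ihb => exact .cons _ (iha.append ihb)
  | node_swap _ _ iha ihb => exact .cons _ ((iha.append ihb).trans List.perm_append_comm)

theorem LTree.labels_ne_nil {E : Type*} (t : LTree E) : t.labels ≠ [] := by
  cases t <;> simp [LTree.labels]

/-- a good labeled binary plane tree (pairwise distinct labels) has no
symmetries: the number of labeled trees `≈`-equivalent to it is exactly `2^m`, where
`m` is its number of internal vertices. -/
theorem stmt_7 {E : Type*} (t : LTree E) (h : t.labels.Nodup) :
    Nat.card {t' : LTree E // LEquiv t' t} = 2 ^ t.numInternal := by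
  induction t with
  | leaf x =>
    have huniq : ∀ t' : LTree E, LEquiv t' (.leaf x) → t' = .leaf x := by
      intro t' h'
      cases h'
      rfl
    haveI : Unique {t' : LTree E // LEquiv t' (.leaf x)} :=
      ⟨⟨⟨.leaf x, .leaf x⟩⟩, fun t' => Subtype.ext (huniq t'.1 t'.2)⟩
    simp [Nat.card_unique, LTree.numInternal]
  | node x a b iha ihb =>
    simp only [LTree.labels, List.nodup_cons, List.nodup_append] at h
    obtain ⟨-, hna, hnb, hd⟩ := h
    have ha := iha hna
    have hb := ihb hnb
    have hne : ¬ LEquiv a b := by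
      intro hab
      obtain ⟨y, hy⟩ := List.exists_mem_of_ne_nil _ (LTree.labels_ne_nil a)
      exact hd y hy y (hab.labels_perm.mem_iff.mp hy) rfl
    set A := {a' : LTree E // LEquiv a' a} with hA
    set B := {b' : LTree E // LEquiv b' b} with hB
    have key : Nat.card {t' : LTree E // LEquiv t' (.node x a b)}
        = Nat.card (Bool × A × B) := by
      refine Nat.card_congr (Equiv.symm (Equiv.ofBijective
        (fun p : Bool × A × B => match p with
          | (false, a', b') => ⟨.node x a'.1 b'.1, .node_same a'.2 b'.2⟩
          | (true, a', b') => ⟨.node x b'.1 a'.1, .node_swap b'.2 a'.2⟩) ⟨?_, ?_⟩))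
      · rintro ⟨s₁, a₁, b₁⟩ ⟨s₂, a₂, b₂⟩ heq
        cases s₁ <;> cases s₂ <;>
          simp only [Subtype.mk.injEq, LTree.node.injEq, Prod.mk.injEq, true_and] at heq ⊢
        · exact ⟨Subtype.ext heq.1, Subtype.ext heq.2⟩
        · exact absurd ((a₁.2.symm').trans' (heq.1 ▸ b₂.2)) hne
        · exact absurd ((a₂.2.symm').trans' (heq.1.symm ▸ b₁.2)) hne
        · exact ⟨Subtype.ext heq.2, Subtype.ext heq.1⟩
      · rintro ⟨t', ht'⟩
        cases ht' with
        | node_same h1 h2 => exact ⟨(false, ⟨_, h1⟩, ⟨_, h2⟩), rfl⟩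
        | node_swap h1 h2 => exact ⟨(true, ⟨_, h2⟩, ⟨_, h1⟩), rfl⟩
    rw [key, Nat.card_prod, Nat.card_prod, ha, hb, Nat.card_eq_fintype_card,
      Fintype.card_bool, LTree.numInternal, pow_add, pow_add, pow_one, mul_assoc]
end

section
/- Fix ε ∈ (0,1) and M > 1/ε. Let t_n be the Etherington–Wedderburn numbers, ϱ ∈ (0,1) the radius of convergence of Σ t_n z^n, ν_j = ϱ^j t_j, and suppose c > 0 is such that ν_n · 2√π · n^{3/2} → c as n → ∞. Then lim_{n→∞} sup_{l} | n² · Σ_{j} ν_j · ν_{l−j} − c² · b(l/n) | = 0, where the inner sum is over integers j with l − ⌊εn⌋ ≤ j ≤ ⌊εn⌋ and j ≠ l − j, and the supremum is over all integers l with l/n ∈ [ε + 1/M, 2ε]. -/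
open Filter Real MeasureTheory intervalIntegral Topology

open Classical in
/-- `b(y) = (1/(4π)) ∫_{y−ε}^{ε} (u(y−u))^{−3/2} du` for `y ∈ (ε, 2ε]`, and `0` otherwise. -/
noncomputable def bfun (ε y : ℝ) : ℝ :=
  if ε < y ∧ y ≤ 2 * ε then
    (1 / (4 * π)) * ∫ u in (y - ε)..ε, (u * (y - u)) ^ (-(3 : ℝ) / 2)
  else 0

lemma sq_rpow_neg32 {x : ℝ} (hx : 0 < x) : (x * x) ^ (-(3 : ℝ) / 2) = (x ^ 3)⁻¹ := by
  have h2 : x * x = x ^ (2 : ℝ) := by rw [Real.rpow_two]; ring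
  rw [h2, ← Real.rpow_mul hx.le]
  norm_num

lemma g_props (y μ A B : ℝ) (hμ : 0 < μ) (hy : y ≤ 2)
    (h : ∀ u ∈ Set.Icc A B, μ ≤ u ∧ u ≤ 2 ∧ μ ≤ y - u) :
    ContinuousOn (fun u => (u * (y - u)) ^ (-(3 : ℝ) / 2)) (Set.Icc A B) ∧
    (∀ u ∈ Set.Icc A B, |(u * (y - u)) ^ (-(3 : ℝ) / 2)| ≤ (μ * μ) ^ (-(3 : ℝ) / 2)) ∧
    (∀ u ∈ Set.Icc A B, ∀ v ∈ Set.Icc A B,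
      |(u * (y - u)) ^ (-(3 : ℝ) / 2) - (v * (y - v)) ^ (-(3 : ℝ) / 2)|
        ≤ (9 * (μ * μ) ^ (-(3 : ℝ) / 2 - 1)) * |u - v|) := by
  have hμμ : 0 < μ * μ := mul_pos hμ hμ
  have hp : ∀ u ∈ Set.Icc A B, μ * μ ≤ u * (y - u) := by
    intro u hu
    obtain ⟨h1, h2, h3⟩ := h u hu
    nlinarith
  have hppos : ∀ u ∈ Set.Icc A B, 0 < u * (y - u) := fun u hu => lt_of_lt_of_le hμμ (hp u hu)
  refine ⟨?_, ?_, ?_⟩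
  · apply ContinuousOn.rpow_const
    · exact (continuousOn_id.mul (continuousOn_const.sub continuousOn_id))
    · exact fun u hu => Or.inl (hppos u hu).ne'
  · intro u hu
    rw [abs_of_nonneg (Real.rpow_nonneg (hppos u hu).le _)]
    exact Real.rpow_le_rpow_of_nonpos hμμ (hp u hu) (by norm_num)
  · -- Lipschitz via derivative bound
    set f' : ℝ → ℝ := fun u => (y - 2 * u) * (-(3 : ℝ) / 2) * (u * (y - u)) ^ (-(3 : ℝ) / 2 - 1)
      with hf'
    have hderiv : ∀ u ∈ Set.Icc A B,
        HasDerivWithinAt (fun u => (u * (y - u)) ^ (-(3 : ℝ) / 2)) (f' u) (Set.Icc A B) u := by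
      intro u hu
      have h1 : HasDerivAt (fun u : ℝ => u * (y - u)) (y - 2 * u) u := by
        have := (hasDerivAt_id u).mul ((hasDerivAt_const u y).sub (hasDerivAt_id u))
        exact this.congr_deriv (by simp; ring)
      have h2 := h1.rpow_const (p := -(3 : ℝ) / 2) (Or.inl (hppos u hu).ne')
      exact h2.hasDerivWithinAt
    have hbound : ∀ u ∈ Set.Icc A B, ‖f' u‖ ≤ 9 * (μ * μ) ^ (-(3 : ℝ) / 2 - 1) := by
      intro u hu
      obtain ⟨h1, h2, h3⟩ := h u hu
      have hb : (u * (y - u)) ^ (-(3 : ℝ) / 2 - 1) ≤ (μ * μ) ^ (-(3 : ℝ) / 2 - 1) :=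
        Real.rpow_le_rpow_of_nonpos hμμ (hp u hu) (by norm_num)
      have hb0 : 0 ≤ (u * (y - u)) ^ (-(3 : ℝ) / 2 - 1) := Real.rpow_nonneg (hppos u hu).le _
      have habs : |y - 2 * u| ≤ 6 := by
        rw [abs_le]; constructor <;> nlinarith
      rw [hf']
      simp only [Real.norm_eq_abs]
      rw [abs_mul, abs_mul, abs_of_nonneg hb0]
      have : |(-(3:ℝ)/2)| = 3/2 := by rw [abs_of_nonpos (by norm_num)]; norm_num
      rw [this]
      nlinarith
    intro u hu v hv
    have := (convex_Icc A B).norm_image_sub_le_of_norm_hasDerivWithin_le hderiv hbound hv hu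
    simpa [Real.norm_eq_abs] using this


lemma riemann_est (g : ℝ → ℝ) (A B L G : ℝ) (hL : 0 ≤ L) (hG : 0 ≤ G)
    (n a N : ℕ) (hn : 0 < n) (hAB : A ≤ B)
    (hcont : ContinuousOn g (Set.Icc A (B + 2 / n)))
    (hlip : ∀ u ∈ Set.Icc A (B + 2 / n), ∀ v ∈ Set.Icc A (B + 2 / n),
      |g u - g v| ≤ L * |u - v|)
    (hGb : ∀ u ∈ Set.Icc A (B + 2 / n), |g u| ≤ G)
    (ha1 : A ≤ (a : ℝ) / n) (ha2 : (a : ℝ) / n ≤ A + 1 / n)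
    (hb1 : B ≤ ((a + N : ℕ) : ℝ) / n) (hb2 : ((a + N : ℕ) : ℝ) / n ≤ B + 2 / n) :
    |(∑ i ∈ Finset.range N, (1 / (n : ℝ)) * g (((a + i : ℕ) : ℝ) / n)) - ∫ u in A..B, g u|
      ≤ L * N / n ^ 2 + 3 * G / n := by
  have hnR : (0 : ℝ) < n := by exact_mod_cast hn
  set s := Set.Icc A (B + 2 / (n : ℝ)) with hs
  have hscon : Set.OrdConnected s := Set.ordConnected_Icc
  set x : ℕ → ℝ := fun i => ((a + i : ℕ) : ℝ) / n with hx
  have hxval : ∀ i, x i = ((a : ℝ) + i) / n := by intro i; rw [hx]; push_cast; ring_nf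
  have hxmono : ∀ i j : ℕ, i ≤ j → x i ≤ x j := by
    intro i j hij
    rw [hxval, hxval]
    gcongr

  have hxs : ∀ i ≤ N, x i ∈ s := by
    intro i hi
    constructor
    · exact le_trans ha1 (hxmono 0 i (Nat.zero_le i))
    · exact le_trans (hxmono i N hi) hb2
  have hxsucc : ∀ i, x (i + 1) = x i + 1 / n := by
    intro i; rw [hxval, hxval]; push_cast; ring
  have hint : ∀ i, i < N → IntervalIntegrable g volume (x i) (x (i + 1)) := by
    intro i hi
    apply (hcont.mono (hscon.uIcc_subset (hxs i hi.le) (hxs (i + 1) hi))).intervalIntegrable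
  have hsplit := intervalIntegral.sum_integral_adjacent_intervals hint
  -- step 1 : Riemann sum vs integral over [x 0, x N]
  have step1 : |(∑ i ∈ Finset.range N, (1 / (n : ℝ)) * g (x i)) - ∫ u in (x 0)..(x N), g u|
      ≤ L * N / n ^ 2 := by
    rw [← hsplit, ← Finset.sum_sub_distrib]
    refine le_trans (Finset.abs_sum_le_sum_abs _ _) ?_
    have hterm : ∀ i ∈ Finset.range N,
        |(1 / (n : ℝ)) * g (x i) - ∫ u in x i..x (i + 1), g u| ≤ L / n ^ 2 := by
      intro i hi
      rw [Finset.mem_range] at hi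
      have hconst : ∫ _ in x i..x (i + 1), g (x i) = (1 / (n : ℝ)) * g (x i) := by
        rw [intervalIntegral.integral_const, hxsucc i]
        simp [smul_eq_mul]
      rw [← hconst, ← abs_neg, neg_sub, ← intervalIntegral.integral_sub (hint i hi)
        (intervalIntegrable_const)]
      have hbd : ∀ u ∈ Set.uIoc (x i) (x (i + 1)), ‖g u - g (x i)‖ ≤ L * (1 / n) := by
        intro u hu
        have hu' : u ∈ Set.Icc (x i) (x (i + 1)) := by
          rw [Set.uIoc_of_le (hxmono i (i + 1) (Nat.le_succ i))] at hu
          exact ⟨hu.1.le, hu.2⟩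
        have hus : u ∈ s := (hscon.uIcc_subset (hxs i hi.le) (hxs (i+1) hi)).trans
          (le_refl _) (by rw [Set.uIcc_of_le (hxmono i (i+1) (Nat.le_succ i))]; exact hu')
        have hxi : x i ∈ s := hxs i hi.le
        have h1 := hlip u hus (x i) hxi
        have h2 : |u - x i| ≤ 1 / n := by
          rw [abs_of_nonneg (by linarith [hu'.1])]
          have := hu'.2
          rw [hxsucc i] at this
          linarith
        calc ‖g u - g (x i)‖ = |g u - g (x i)| := rfl
          _ ≤ L * |u - x i| := h1
          _ ≤ L * (1 / n) := by apply mul_le_mul_of_nonneg_left h2 hL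
      have := intervalIntegral.norm_integral_le_of_norm_le_const hbd
      rw [Real.norm_eq_abs] at this
      refine le_trans this ?_
      rw [hxsucc i]
      have : |x i + 1 / (n : ℝ) - x i| = 1 / n := by
        rw [show x i + 1 / (n : ℝ) - x i = 1 / n by ring, abs_of_pos (by positivity)]
      rw [this]
      exact le_of_eq (by ring)
    refine le_trans (Finset.sum_le_card_nsmul _ _ (L / n ^ 2) hterm) ?_
    rw [Finset.card_range, nsmul_eq_mul]
    rw [mul_div_assoc]
    ring_nf
    exact le_refl _
  -- step 2 : integral endpoints adjustment
  have h2n : (0:ℝ) < 2 / n := by positivity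
  have hAs : A ∈ s := ⟨le_refl A, by linarith⟩
  have hBs : B ∈ s := ⟨hAB, by linarith⟩
  have hx0 : x 0 ∈ s := hxs 0 (Nat.zero_le N)
  have hxN : x N ∈ s := hxs N (le_refl N)
  have i1 : IntervalIntegrable g volume A (x 0) :=
    (hcont.mono (hscon.uIcc_subset hAs hx0)).intervalIntegrable
  have i2 : IntervalIntegrable g volume (x 0) B :=
    (hcont.mono (hscon.uIcc_subset hx0 hBs)).intervalIntegrable
  have i3 : IntervalIntegrable g volume B (x N) :=
    (hcont.mono (hscon.uIcc_subset hBs hxN)).intervalIntegrable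
  have e1 : ∫ u in (x 0)..(x N), g u = (∫ u in (x 0)..B, g u) + ∫ u in B..(x N), g u :=
    (intervalIntegral.integral_add_adjacent_intervals i2 i3).symm
  have e2 : ∫ u in A..B, g u = (∫ u in A..(x 0), g u) + ∫ u in (x 0)..B, g u :=
    (intervalIntegral.integral_add_adjacent_intervals i1 i2).symm
  have b1 : |∫ u in A..(x 0), g u| ≤ G * (1 / n) := by
    have hbd : ∀ u ∈ Set.uIoc A (x 0), ‖g u‖ ≤ G := by
      intro u hu
      exact hGb u ((hscon.uIcc_subset hAs hx0) (Set.uIoc_subset_uIcc hu))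
    have := intervalIntegral.norm_integral_le_of_norm_le_const hbd
    rw [Real.norm_eq_abs] at this
    refine le_trans this ?_
    have hx0v : x 0 = (a : ℝ) / n := by rw [hxval]; norm_num
    have hax : |x 0 - A| ≤ 1 / n := by
      rw [abs_of_nonneg (by rw [hx0v]; linarith)]
      rw [hx0v]; linarith
    exact mul_le_mul_of_nonneg_left hax hG
  have b2 : |∫ u in B..(x N), g u| ≤ G * (2 / n) := by
    have hbd : ∀ u ∈ Set.uIoc B (x N), ‖g u‖ ≤ G := by
      intro u hu
      exact hGb u ((hscon.uIcc_subset hBs hxN) (Set.uIoc_subset_uIcc hu))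
    have := intervalIntegral.norm_integral_le_of_norm_le_const hbd
    rw [Real.norm_eq_abs] at this
    refine le_trans this ?_
    have hax : |x N - B| ≤ 2 / n := by
      rw [abs_of_nonneg (by linarith [hb1] : (0:ℝ) ≤ x N - B)]
      have : x N = ((a + N : ℕ) : ℝ) / n := rfl
      rw [this]
      linarith
    exact mul_le_mul_of_nonneg_left hax hG
  -- combine everything
  calc |(∑ i ∈ Finset.range N, (1 / (n : ℝ)) * g (x i)) - ∫ u in A..B, g u|
      = |((∑ i ∈ Finset.range N, (1 / (n : ℝ)) * g (x i)) - ∫ u in (x 0)..(x N), g u)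
          + ((∫ u in B..(x N), g u) - ∫ u in A..(x 0), g u)| := by
        rw [e1, e2]; congr 1; ring
    _ ≤ |(∑ i ∈ Finset.range N, (1 / (n : ℝ)) * g (x i)) - ∫ u in (x 0)..(x N), g u|
          + |(∫ u in B..(x N), g u) - ∫ u in A..(x 0), g u| := abs_add_le _ _
    _ ≤ L * N / n ^ 2 + (G * (2 / n) + G * (1 / n)) := by
        have := abs_sub (∫ u in B..(x N), g u) (∫ u in A..(x 0), g u)
        gcongr
        exact le_trans (abs_sub _ _) (add_le_add b2 b1)
    _ ≤ L * N / n ^ 2 + 3 * G / n := by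
        have : G * (2 / (n:ℝ)) + G * (1 / n) = 3 * G / n := by ring
        rw [this]



set_option maxHeartbeats 1000000 in
theorem stmt_11 (ε M : ℝ) (hε : ε ∈ Set.Ioo (0 : ℝ) 1) (hM : 1 / ε < M)
    (ρ : ℝ) (hρ0 : 0 < ρ) (hρ1 : ρ < 1)
    (hρ : ∀ r : ℝ, 0 ≤ r →
      ((r < ρ → Summable (fun n : ℕ => (EW n : ℝ) * r ^ n)) ∧
       (ρ < r → ¬ Summable (fun n : ℕ => (EW n : ℝ) * r ^ n))))
    (ν : ℕ → ℝ) (hν : ∀ j, ν j = ρ ^ j * (EW j : ℝ))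
    (c : ℝ) (hc0 : 0 < c)
    (hc : Tendsto (fun n : ℕ => ν n * (2 * Real.sqrt π) * (n : ℝ) ^ ((3 : ℝ) / 2))
      atTop (𝓝 c)) :
    ∀ δ > (0 : ℝ), ∀ᶠ n : ℕ in atTop, ∀ l : ℕ,
      ε + 1 / M ≤ (l : ℝ) / n → (l : ℝ) / n ≤ 2 * ε →
      |(n : ℝ) ^ 2 *
          (∑ j ∈ (Finset.Icc (l - ⌊ε * n⌋₊) ⌊ε * n⌋₊).filter (fun j => j ≠ l - j),
            ν j * ν (l - j)) -
          c ^ 2 * bfun ε ((l : ℝ) / n)| < δ := by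
  intro δ hδ
  obtain ⟨hε0, hε1⟩ := hε
  have hπ : (0 : ℝ) < π := Real.pi_pos
  have hπne : π ≠ 0 := hπ.ne'
  have hM0 : (0 : ℝ) < M := lt_trans (by positivity) hM
  set β : ℝ := 1 / M with hβ
  have hβ0 : 0 < β := by positivity
  have hβne : β ≠ 0 := hβ0.ne'
  have hβε : β < ε := by
    rw [hβ, div_lt_iff₀ hM0]
    rw [div_lt_iff₀ hε0] at hM
    nlinarith
  set μ : ℝ := β / 2 with hμdef
  have hμ0 : 0 < μ := by positivity
  set G : ℝ := (μ * μ) ^ (-(3 : ℝ) / 2) with hGdef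
  set Lc : ℝ := 9 * (μ * μ) ^ (-(3 : ℝ) / 2 - 1) with hLdef
  have hG0 : 0 ≤ G := Real.rpow_nonneg (by positivity) _
  have hL0 : 0 ≤ Lc := by
    have : (0 : ℝ) ≤ (μ * μ) ^ (-(3 : ℝ) / 2 - 1) := Real.rpow_nonneg (by positivity) _
    rw [hLdef]; linarith
  set η : ℝ := min c (π * β ^ 3 * δ / (9 * c)) with hηdef
  have hη0 : 0 < η := lt_min hc0 (by positivity)
  have hηc : η ≤ c := min_le_left _ _
  have hη2 : η ≤ π * β ^ 3 * δ / (9 * c) := min_le_right _ _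
  obtain ⟨N₀, hN₀⟩ := (Metric.tendsto_atTop.mp hc) η hη0
  have hw : ∀ j : ℕ, N₀ ≤ j → |ν j * (2 * Real.sqrt π) * (j : ℝ) ^ ((3 : ℝ) / 2) - c| ≤ η := by
    intro j hj
    have := hN₀ j hj
    rw [Real.dist_eq] at this
    exact this.le
  have hsq : (2 * Real.sqrt π) * (2 * Real.sqrt π) = 4 * π := by
    rw [show (2 * Real.sqrt π) * (2 * Real.sqrt π) = 4 * (Real.sqrt π * Real.sqrt π) by ring,
      Real.mul_self_sqrt hπ.le]
  have ev1 : ∀ᶠ n : ℕ in atTop, 1 ≤ n := eventually_ge_atTop 1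
  have ev2 : ∀ᶠ n : ℕ in atTop, (N₀ : ℝ) + 1 ≤ β * n := by
    have h1 : Tendsto (fun n : ℕ => β * (n : ℝ)) atTop atTop :=
      Tendsto.const_mul_atTop hβ0 tendsto_natCast_atTop_atTop
    exact h1.eventually_ge_atTop _
  have ev3 : ∀ᶠ n : ℕ in atTop, 2 / (n : ℝ) < μ :=
    (tendsto_const_div_atTop_nhds_zero_nat 2).eventually_lt_const hμ0
  have ev4 : ∀ᶠ n : ℕ in atTop, c ^ 2 / (π * β ^ 3) / (n : ℝ) < δ / 3 :=
    (tendsto_const_div_atTop_nhds_zero_nat _).eventually_lt_const (by positivity)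
  have ev5 : ∀ᶠ n : ℕ in atTop, c ^ 2 / (4 * π) * (Lc * 2 + 3 * G) / (n : ℝ) < δ / 3 :=
    (tendsto_const_div_atTop_nhds_zero_nat _).eventually_lt_const (by positivity)
  filter_upwards [ev1, ev2, ev3, ev4, ev5] with n hn1 hn2 hn3 hn4 hn5
  intro l hl1 hl2
  have hn0 : (0 : ℝ) < n := by exact_mod_cast hn1
  have hnne : (n : ℝ) ≠ 0 := hn0.ne'
  set y : ℝ := (l : ℝ) / n with hydef
  have hyn : (l : ℝ) = y * n := by rw [hydef]; field_simp
  have hy1 : ε + β ≤ y := by rw [hβ]; exact hl1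
  have hy2 : y ≤ 2 * ε := hl2
  have hβn1 : (1 : ℝ) ≤ β * n := by
    have : (0 : ℝ) ≤ N₀ := Nat.cast_nonneg N₀
    linarith
  set m : ℕ := ⌊ε * (n : ℝ)⌋₊ with hmdef
  have hm1 : (m : ℝ) ≤ ε * n := Nat.floor_le (by positivity)
  have hm2 : ε * (n : ℝ) < m + 1 := Nat.lt_floor_add_one _
  have hlR : ε * n + β * n ≤ (l : ℝ) := by
    rw [hyn]
    have := mul_le_mul_of_nonneg_right hy1 hn0.le
    linarith
  have hml : m < l := by
    have h1 : (m : ℝ) + 1 ≤ (l : ℝ) := by linarith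
    have : m + 1 ≤ l := by exact_mod_cast h1
    omega
  set a : ℕ := l - m with hadef
  have hacast : (a : ℝ) = (l : ℝ) - m := by rw [hadef, Nat.cast_sub hml.le]
  have han : β * n ≤ (a : ℝ) := by rw [hacast]; linarith
  have hl2m : l ≤ 2 * m + 1 := by
    have hy2n : y * n ≤ 2 * (ε * n) := by
      have := mul_le_mul_of_nonneg_right hy2 hn0.le
      linarith
    have h1 : (l : ℝ) < 2 * m + 2 := by rw [hyn]; linarith
    have : l < 2 * m + 2 := by exact_mod_cast h1
    omega
  set N : ℕ := m + 1 - a with hNdef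
  have haN : a + N = m + 1 := by omega
  have hmn : m ≤ n := by
    have h1 : ε * n ≤ 1 * n := mul_le_mul_of_nonneg_right hε1.le hn0.le
    have : (m : ℝ) ≤ (n : ℝ) := by linarith
    exact_mod_cast this
  have hNn : N ≤ 2 * n := by omega
  set w : ℕ → ℝ := fun j => ν j * (2 * Real.sqrt π) * (j : ℝ) ^ ((3 : ℝ) / 2) with hwdef
  set Q : ℕ → ℝ := fun j => ((j : ℝ) * ((l - j : ℕ) : ℝ)) ^ (-(3 : ℝ) / 2) with hQdef
  set T : Finset ℕ := Finset.Icc a m with hT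
  -- per-index facts
  have hjfacts : ∀ j ∈ T, β * n ≤ (j : ℝ) ∧ β * n ≤ ((l - j : ℕ) : ℝ) ∧
      ((l - j : ℕ) : ℝ) = (l : ℝ) - j ∧ N₀ ≤ j ∧ N₀ ≤ l - j := by
    intro j hj
    rw [hT, Finset.mem_Icc] at hj
    obtain ⟨haj, hjm⟩ := hj
    have hjl : j ≤ l := le_trans hjm hml.le
    have hkcast : ((l - j : ℕ) : ℝ) = (l : ℝ) - j := by rw [Nat.cast_sub hjl]
    have hajR : (a : ℝ) ≤ j := Nat.cast_le.mpr haj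
    have hjmR : (j : ℝ) ≤ m := Nat.cast_le.mpr hjm
    have h1 : β * n ≤ (j : ℝ) := le_trans han hajR
    have h2 : β * n ≤ ((l - j : ℕ) : ℝ) := by
      rw [hkcast]; rw [hacast] at han; linarith
    have hN₀j : N₀ ≤ j := by
      have : (N₀ : ℝ) ≤ (j : ℝ) := by linarith
      exact_mod_cast this
    have hN₀k : N₀ ≤ l - j := by
      have : (N₀ : ℝ) ≤ ((l - j : ℕ) : ℝ) := by linarith
      exact_mod_cast this
    exact ⟨h1, h2, hkcast, hN₀j, hN₀k⟩
  -- product identity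
  have hid : ∀ j ∈ T, ν j * ν (l - j) = w j * w (l - j) * ((4 * π)⁻¹ * Q j) := by
    intro j hj
    obtain ⟨h1, h2, hkcast, _, _⟩ := hjfacts j hj
    have hj0 : (0 : ℝ) < j := by linarith
    have hk0 : (0 : ℝ) < ((l - j : ℕ) : ℝ) := by linarith
    have hjk0 : (0 : ℝ) < (j : ℝ) * ((l - j : ℕ) : ℝ) := mul_pos hj0 hk0
    have ePQ : ((j : ℝ) ^ ((3 : ℝ) / 2)) * (((l - j : ℕ) : ℝ) ^ ((3 : ℝ) / 2))
        = ((j : ℝ) * ((l - j : ℕ) : ℝ)) ^ ((3 : ℝ) / 2) := (Real.mul_rpow hj0.le hk0.le).symm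
    have eQ : ((j : ℝ) * ((l - j : ℕ) : ℝ)) ^ ((3 : ℝ) / 2) * Q j = 1 := by
      rw [hQdef]
      simp only
      rw [← Real.rpow_add hjk0]
      norm_num
    have expand : w j * w (l - j) * ((4 * π)⁻¹ * Q j)
        = (ν j * ν (l - j)) * (((2 * Real.sqrt π) * (2 * Real.sqrt π)) * (4 * π)⁻¹)
          * (((j : ℝ) ^ ((3 : ℝ) / 2)) * (((l - j : ℕ) : ℝ) ^ ((3 : ℝ) / 2)) * Q j) := by
      simp only [hwdef]
      ring
    rw [expand, hsq, ePQ, eQ, mul_one, mul_inv_cancel₀ (by positivity : (4:ℝ) * π ≠ 0), mul_one]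
  -- Q bounds
  have hQb : ∀ j ∈ T, 0 ≤ Q j ∧ Q j ≤ ((β * n) ^ 3)⁻¹ := by
    intro j hj
    obtain ⟨h1, h2, _, _, _⟩ := hjfacts j hj
    have hb0 : (0 : ℝ) < β * n := by positivity
    have hjk : (β * n) * (β * n) ≤ (j : ℝ) * ((l - j : ℕ) : ℝ) :=
      mul_le_mul h1 h2 hb0.le (by linarith)
    constructor
    · rw [hQdef]; exact Real.rpow_nonneg (by positivity) _
    · have := Real.rpow_le_rpow_of_nonpos (mul_pos hb0 hb0) hjk
        (by norm_num : -(3 : ℝ) / 2 ≤ 0)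
      rw [sq_rpow_neg32 hb0] at this
      rw [hQdef]
      exact this
  -- w bounds
  have hwb : ∀ j ∈ T, |w j * w (l - j) - c ^ 2| ≤ 3 * c * η ∧ |w j * w (l - j)| ≤ 4 * c ^ 2 := by
    intro j hj
    obtain ⟨_, _, _, hN₀j, hN₀k⟩ := hjfacts j hj
    have e1 : |w j - c| ≤ η := by simp only [hwdef]; exact hw j hN₀j
    have e2 : |w (l - j) - c| ≤ η := by simp only [hwdef]; exact hw _ hN₀k
    have e3 : |w j| ≤ 2 * c := by
      calc |w j| = |(w j - c) + c| := by congr 1; ring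
        _ ≤ |w j - c| + |c| := abs_add_le _ _
        _ ≤ η + c := add_le_add e1 (le_of_eq (abs_of_pos hc0))
        _ ≤ 2 * c := by linarith
    have e4 : |w (l - j)| ≤ 2 * c := by
      calc |w (l - j)| = |(w (l - j) - c) + c| := by congr 1; ring
        _ ≤ |w (l - j) - c| + |c| := abs_add_le _ _
        _ ≤ η + c := add_le_add e2 (le_of_eq (abs_of_pos hc0))
        _ ≤ 2 * c := by linarith
    constructor
    · calc |w j * w (l - j) - c ^ 2|
          = |(w j - c) * w (l - j) + c * (w (l - j) - c)| := by congr 1; ring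
        _ ≤ |(w j - c) * w (l - j)| + |c * (w (l - j) - c)| := abs_add_le _ _
        _ = |w j - c| * |w (l - j)| + |c| * |w (l - j) - c| := by
            rw [abs_mul (w j - c) (w (l - j)), abs_mul c (w (l - j) - c)]
        _ ≤ η * (2 * c) + c * η := by
            refine add_le_add (mul_le_mul e1 e4 (abs_nonneg _) hη0.le) ?_
            rw [abs_of_pos hc0]
            exact mul_le_mul_of_nonneg_left e2 hc0.le
        _ = 3 * c * η := by ring
    · rw [abs_mul]
      calc |w j| * |w (l - j)| ≤ (2 * c) * (2 * c) :=
            mul_le_mul e3 e4 (abs_nonneg _) (by linarith)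
        _ = 4 * c ^ 2 := by ring
  -- splitting off the diagonal
  have hsum_split : (∑ j ∈ T.filter (fun j => j ≠ l - j), ν j * ν (l - j))
      = (∑ j ∈ T, ν j * ν (l - j))
        - ∑ j ∈ T.filter (fun j => ¬ j ≠ l - j), ν j * ν (l - j) := by
    have h := Finset.sum_filter_add_sum_filter_not T (fun j => j ≠ l - j)
      (fun j => ν j * ν (l - j))
    linarith
  have hdiag : |∑ j ∈ T.filter (fun j => ¬ j ≠ l - j), ν j * ν (l - j)|
      ≤ (4 * c ^ 2) * ((4 * π)⁻¹ * ((β * n) ^ 3)⁻¹) := by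
    have hcard : (T.filter (fun j => ¬ j ≠ l - j)).card ≤ 1 := by
      rw [Finset.card_le_one]
      intro p hp q hq
      rw [Finset.mem_filter, hT, Finset.mem_Icc] at hp hq
      omega
    refine le_trans (Finset.abs_sum_le_sum_abs _ _) ?_
    have hterm : ∀ j ∈ T.filter (fun j => ¬ j ≠ l - j),
        |ν j * ν (l - j)| ≤ (4 * c ^ 2) * ((4 * π)⁻¹ * ((β * n) ^ 3)⁻¹) := by
      intro j hj
      have hjT : j ∈ T := (Finset.mem_filter.mp hj).1
      rw [hid j hjT, abs_mul]
      obtain ⟨hQ0, hQb'⟩ := hQb j hjT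
      rw [abs_of_nonneg (mul_nonneg (by positivity) hQ0)]
      refine mul_le_mul (hwb j hjT).2 ?_ (mul_nonneg (by positivity) hQ0) (by positivity)
      exact mul_le_mul_of_nonneg_left hQb' (by positivity)
    refine le_trans (Finset.sum_le_card_nsmul _ _ _ hterm) ?_
    rw [nsmul_eq_mul]
    have h1 : ((T.filter (fun j => ¬ j ≠ l - j)).card : ℝ) ≤ 1 := by exact_mod_cast hcard
    have h2 : (0:ℝ) ≤ (4 * c ^ 2) * ((4 * π)⁻¹ * ((β * n) ^ 3)⁻¹) := by positivity
    calc ((T.filter (fun j => ¬ j ≠ l - j)).card : ℝ)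
          * ((4 * c ^ 2) * ((4 * π)⁻¹ * ((β * n) ^ 3)⁻¹))
        ≤ 1 * ((4 * c ^ 2) * ((4 * π)⁻¹ * ((β * n) ^ 3)⁻¹)) :=
          mul_le_mul_of_nonneg_right h1 h2
      _ = (4 * c ^ 2) * ((4 * π)⁻¹ * ((β * n) ^ 3)⁻¹) := one_mul _
  -- main term comparison
  have hB : |(∑ j ∈ T, ν j * ν (l - j)) - ∑ j ∈ T, c ^ 2 * ((4 * π)⁻¹ * Q j)|
      ≤ (N : ℝ) * (3 * c * η * ((4 * π)⁻¹ * ((β * n) ^ 3)⁻¹)) := by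
    rw [← Finset.sum_sub_distrib]
    refine le_trans (Finset.abs_sum_le_sum_abs _ _) ?_
    have hterm : ∀ j ∈ T, |ν j * ν (l - j) - c ^ 2 * ((4 * π)⁻¹ * Q j)|
        ≤ 3 * c * η * ((4 * π)⁻¹ * ((β * n) ^ 3)⁻¹) := by
      intro j hj
      rw [hid j hj]
      obtain ⟨hQ0, hQb'⟩ := hQb j hj
      rw [show w j * w (l - j) * ((4 * π)⁻¹ * Q j) - c ^ 2 * ((4 * π)⁻¹ * Q j)
          = (w j * w (l - j) - c ^ 2) * ((4 * π)⁻¹ * Q j) by ring]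
      rw [abs_mul, abs_of_nonneg (mul_nonneg (by positivity) hQ0)]
      refine mul_le_mul (hwb j hj).1 ?_ (mul_nonneg (by positivity) hQ0) (by positivity)
      exact mul_le_mul_of_nonneg_left hQb' (by positivity)
    refine le_trans (Finset.sum_le_card_nsmul _ _ _ hterm) ?_
    rw [nsmul_eq_mul]
    have hcardT : T.card = N := by rw [hT, Nat.card_Icc]
    rw [hcardT]
  -- the Riemann sum identity
  set g : ℝ → ℝ := fun u => (u * (y - u)) ^ (-(3 : ℝ) / 2) with hgdef
  have hterm_g : ∀ j ∈ T, (1 / (n : ℝ)) * g ((j : ℝ) / n) = (n : ℝ) ^ 2 * Q j := by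
    intro j hj
    obtain ⟨h1, h2, hkcast, _, _⟩ := hjfacts j hj
    have hj0 : (0 : ℝ) ≤ j := Nat.cast_nonneg j
    have hknn : (0 : ℝ) ≤ (l : ℝ) - j := by rw [← hkcast]; positivity
    have hyj : y - (j : ℝ) / n = ((l : ℝ) - j) / n := by rw [hydef]; ring
    have hgval : g ((j : ℝ) / n)
        = (((j : ℝ) * ((l : ℝ) - j)) / ((n : ℝ) * n)) ^ (-(3 : ℝ) / 2) := by
      simp only [hgdef]
      rw [hyj]
      congr 1
      field_simp
    rw [hgval, Real.div_rpow (mul_nonneg hj0 hknn) (by positivity), sq_rpow_neg32 hn0]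
    rw [hQdef]
    simp only
    rw [hkcast]
    field_simp
  have hC : (n : ℝ) ^ 2 * (∑ j ∈ T, c ^ 2 * ((4 * π)⁻¹ * Q j))
      = c ^ 2 / (4 * π) *
        (∑ i ∈ Finset.range N, (1 / (n : ℝ)) * g (((a + i : ℕ) : ℝ) / n)) := by
    rw [hT, ← Finset.Ico_add_one_right_eq_Icc, Finset.sum_Ico_eq_sum_range]
    have hNr : m + 1 - a = N := by omega
    rw [hNr, Finset.mul_sum, Finset.mul_sum]
    refine Finset.sum_congr rfl ?_
    intro i hi
    rw [Finset.mem_range] at hi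
    have hmem : a + i ∈ T := by rw [hT, Finset.mem_Icc]; omega
    rw [hterm_g (a + i) hmem]
    ring
  -- Riemann estimate
  have hAB : y - ε ≤ ε := by linarith
  have hsub : ∀ u ∈ Set.Icc (y - ε) (ε + 2 / (n : ℝ)), μ ≤ u ∧ u ≤ 2 ∧ μ ≤ y - u := by
    intro u hu
    obtain ⟨hu1, hu2⟩ := hu
    exact ⟨by linarith, by linarith, by linarith⟩
  obtain ⟨hcont, hGb, hlip⟩ := g_props y μ (y - ε) (ε + 2 / (n : ℝ)) hμ0 (by linarith) hsub
  have hn1' : 0 < n := hn1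
  have ha1 : y - ε ≤ (a : ℝ) / n := by
    rw [le_div_iff₀ hn0]
    have hexp : (y - ε) * n = y * n - ε * n := by ring
    rw [hexp, ← hyn, hacast]
    linarith
  have ha2 : (a : ℝ) / n ≤ (y - ε) + 1 / n := by
    rw [div_le_iff₀ hn0]
    have hexp : ((y - ε) + 1 / n) * n = y * n - ε * n + 1 := by field_simp
    rw [hexp, ← hyn, hacast]
    linarith
  have hb1 : ε ≤ ((a + N : ℕ) : ℝ) / n := by
    rw [le_div_iff₀ hn0, haN]
    push_cast
    linarith
  have hb2 : ((a + N : ℕ) : ℝ) / n ≤ ε + 2 / n := by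
    rw [div_le_iff₀ hn0, haN]
    have hexp : (ε + 2 / (n : ℝ)) * n = ε * n + 2 := by field_simp
    rw [hexp]
    push_cast
    linarith
  have hD := riemann_est g (y - ε) ε Lc G hL0 hG0 n a N hn1' hAB hcont hlip hGb ha1 ha2 hb1 hb2
  -- bfun value
  have hbfun : c ^ 2 * bfun ε y
      = c ^ 2 / (4 * π) * ∫ u in (y - ε)..ε, (u * (y - u)) ^ (-(3 : ℝ) / 2) := by
    rw [show bfun ε y = 1 / (4 * π) * ∫ u in (y - ε)..ε, (u * (y - u)) ^ (-(3 : ℝ) / 2) by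
      unfold bfun
      rw [if_pos ⟨by linarith, hy2⟩]]
    ring
  -- assembling
  set R : ℝ := ∑ i ∈ Finset.range N, (1 / (n : ℝ)) * g (((a + i : ℕ) : ℝ) / n) with hR
  set I : ℝ := ∫ u in (y - ε)..ε, g u with hI
  have decomp : (n : ℝ) ^ 2 * (∑ j ∈ T.filter (fun j => j ≠ l - j), ν j * ν (l - j))
        - c ^ 2 * bfun ε y
      = (n : ℝ) ^ 2 * ((∑ j ∈ T, ν j * ν (l - j)) - ∑ j ∈ T, c ^ 2 * ((4 * π)⁻¹ * Q j))
        + (c ^ 2 / (4 * π)) * (R - I)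
        - (n : ℝ) ^ 2 * (∑ j ∈ T.filter (fun j => ¬ j ≠ l - j), ν j * ν (l - j)) := by
    rw [hsum_split, hbfun]
    linear_combination hC
  rw [decomp]
  -- three bounds
  have hQP0 : (0:ℝ) ≤ 3 * c * η * ((4 * π)⁻¹ * ((β * n) ^ 3)⁻¹) := by positivity
  have bound1 : |(n : ℝ) ^ 2 * ((∑ j ∈ T, ν j * ν (l - j)) - ∑ j ∈ T, c ^ 2 * ((4 * π)⁻¹ * Q j))|
      ≤ δ / 6 := by
    rw [abs_mul, abs_of_nonneg (by positivity : (0:ℝ) ≤ (n : ℝ) ^ 2)]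
    have h1 : (n : ℝ) ^ 2 * |(∑ j ∈ T, ν j * ν (l - j)) - ∑ j ∈ T, c ^ 2 * ((4 * π)⁻¹ * Q j)|
        ≤ (n : ℝ) ^ 2 * ((N : ℝ) * (3 * c * η * ((4 * π)⁻¹ * ((β * n) ^ 3)⁻¹))) :=
      mul_le_mul_of_nonneg_left hB (by positivity)
    have hNR : (N : ℝ) ≤ 2 * n := by exact_mod_cast hNn
    have h2 : (n : ℝ) ^ 2 * ((N : ℝ) * (3 * c * η * ((4 * π)⁻¹ * ((β * n) ^ 3)⁻¹)))
        ≤ (n : ℝ) ^ 2 * ((2 * n) * (3 * c * η * ((4 * π)⁻¹ * ((β * n) ^ 3)⁻¹))) :=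
      mul_le_mul_of_nonneg_left (mul_le_mul_of_nonneg_right hNR hQP0) (by positivity)
    have h3 : (n : ℝ) ^ 2 * ((2 * n) * (3 * c * η * ((4 * π)⁻¹ * ((β * n) ^ 3)⁻¹)))
        = 3 * c * η / (2 * π * β ^ 3) := by
      field_simp
      ring
    have h4 : 3 * c * η / (2 * π * β ^ 3) ≤ δ / 6 := by
      rw [div_le_iff₀ (by positivity)]
      have hstep : 3 * c * η ≤ 3 * c * (π * β ^ 3 * δ / (9 * c)) :=
        mul_le_mul_of_nonneg_left hη2 (by positivity)
      have heq : 3 * c * (π * β ^ 3 * δ / (9 * c)) = δ / 6 * (2 * π * β ^ 3) := by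
        field_simp
        ring
      linarith
    linarith
  have bound2 : |(c ^ 2 / (4 * π)) * (R - I)| < δ / 3 := by
    rw [abs_mul, abs_of_nonneg (by positivity : (0:ℝ) ≤ c ^ 2 / (4 * π))]
    have h1 : Lc * N / (n:ℝ) ^ 2 + 3 * G / n ≤ (Lc * 2 + 3 * G) / n := by
      have hNR : (N : ℝ) ≤ 2 * n := by exact_mod_cast hNn
      have h2 : Lc * N / (n:ℝ) ^ 2 ≤ Lc * 2 / n := by
        rw [div_le_div_iff₀ (by positivity) (by positivity)]
        have hs1 : Lc * (N:ℝ) * n ≤ Lc * (2 * n) * n := by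
          refine mul_le_mul_of_nonneg_right (mul_le_mul_of_nonneg_left hNR hL0) hn0.le
        calc Lc * (N:ℝ) * n ≤ Lc * (2 * n) * n := hs1
          _ = Lc * 2 * (n:ℝ) ^ 2 := by ring
      have h3 : (Lc * 2 + 3 * G) / (n:ℝ) = Lc * 2 / n + 3 * G / n := by ring
      linarith
    calc c ^ 2 / (4 * π) * |R - I| ≤ c ^ 2 / (4 * π) * ((Lc * 2 + 3 * G) / n) :=
          mul_le_mul_of_nonneg_left (le_trans hD h1) (by positivity)
      _ = c ^ 2 / (4 * π) * (Lc * 2 + 3 * G) / n := by ring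
      _ < δ / 3 := hn5
  have bound3 : |(n : ℝ) ^ 2 * (∑ j ∈ T.filter (fun j => ¬ j ≠ l - j), ν j * ν (l - j))|
      < δ / 3 := by
    rw [abs_mul, abs_of_nonneg (by positivity : (0:ℝ) ≤ (n : ℝ) ^ 2)]
    have h1 : (n : ℝ) ^ 2 * |∑ j ∈ T.filter (fun j => ¬ j ≠ l - j), ν j * ν (l - j)|
        ≤ (n : ℝ) ^ 2 * ((4 * c ^ 2) * ((4 * π)⁻¹ * ((β * n) ^ 3)⁻¹)) :=
      mul_le_mul_of_nonneg_left hdiag (by positivity)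
    have h2 : (n : ℝ) ^ 2 * ((4 * c ^ 2) * ((4 * π)⁻¹ * ((β * n) ^ 3)⁻¹))
        = c ^ 2 / (π * β ^ 3) / n := by
      field_simp
    rw [h2] at h1
    exact lt_of_le_of_lt h1 hn4
  have habs : |(n : ℝ) ^ 2 * ((∑ j ∈ T, ν j * ν (l - j)) - ∑ j ∈ T, c ^ 2 * ((4 * π)⁻¹ * Q j))
        + (c ^ 2 / (4 * π)) * (R - I)
        - (n : ℝ) ^ 2 * (∑ j ∈ T.filter (fun j => ¬ j ≠ l - j), ν j * ν (l - j))|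
      ≤ |(n : ℝ) ^ 2 * ((∑ j ∈ T, ν j * ν (l - j)) - ∑ j ∈ T, c ^ 2 * ((4 * π)⁻¹ * Q j))|
        + |(c ^ 2 / (4 * π)) * (R - I)|
        + |(n : ℝ) ^ 2 * (∑ j ∈ T.filter (fun j => ¬ j ≠ l - j), ν j * ν (l - j))| := by
    refine le_trans (abs_sub _ _) ?_
    have := abs_add_le ((n : ℝ) ^ 2 * ((∑ j ∈ T, ν j * ν (l - j))
      - ∑ j ∈ T, c ^ 2 * ((4 * π)⁻¹ * Q j))) ((c ^ 2 / (4 * π)) * (R - I))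
    linarith
  calc |(n : ℝ) ^ 2 * ((∑ j ∈ T, ν j * ν (l - j)) - ∑ j ∈ T, c ^ 2 * ((4 * π)⁻¹ * Q j))
        + (c ^ 2 / (4 * π)) * (R - I)
        - (n : ℝ) ^ 2 * (∑ j ∈ T.filter (fun j => ¬ j ≠ l - j), ν j * ν (l - j))|
      ≤ |(n : ℝ) ^ 2 * ((∑ j ∈ T, ν j * ν (l - j)) - ∑ j ∈ T, c ^ 2 * ((4 * π)⁻¹ * Q j))|
        + |(c ^ 2 / (4 * π)) * (R - I)|
        + |(n : ℝ) ^ 2 * (∑ j ∈ T.filter (fun j => ¬ j ≠ l - j), ν j * ν (l - j))| := habs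
    _ < δ / 6 + δ / 3 + δ / 3 := by
        have hb1' := bound1
        have hb2' := bound2
        have hb3' := bound3
        linarith
    _ < δ := by linarith
end
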